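/- In PG(2,q) with q ≡ 3 (mod 4), q ≥ 7, let b be a non-square in GF(q) with b − 1 also a non-square. Then S = C_1 ∪ C_b ∪ {(0:0:1)} is an untouchable set of size 2q + 1, where C_k = V(xy + kz²). -/

import Mathlib

/-- The point type of `PG(2,q)` over the field `F`: the projectivization of `F³`.
We also use this type for lines, via line coordinates. -/
abbrev PG2 (F : Type) [Field F] : Type := Projectivization F (Fin 3 → F)

/-- A point of `PG(2,q)` with homogeneous coordinates `(x : y : z)`. -/
noncomputable def pt {F : Type} [Field F] (x y z : F) (h : ![x, y, z] ≠ 0) : PG2 F :=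
  Projectivization.mk F ![x, y, z] h

theorem vec_ne_zero {F : Type} [Field F] {x y z : F} (i : Fin 3) (h : ![x, y, z] i ≠ 0) :
    ![x, y, z] ≠ 0 := fun hz => h (by simp [hz])

/-- Incidence between a line `l` (in line coordinates) and a point `P`. This is well defined:
the pairing is bilinear, so its vanishing is independent of the choice of representatives. -/
def inc {F : Type} [Field F] (l P : PG2 F) : Prop :=
  l.rep 0 * P.rep 0 + l.rep 1 * P.rep 1 + l.rep 2 * P.rep 2 = 0

/-- A set of points is untouchable if no line meets it in exactly one point. -/
def Untouchable {F : Type} [Field F] (S : Set (PG2 F)) : Prop :=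
  ∀ l : PG2 F, {P ∈ S | inc l P}.ncard ≠ 1

/-- A line `l` is tangent to a point set `S` if it meets `S` in exactly one point. -/
def IsTangent {F : Type} [Field F] (l : PG2 F) (S : Set (PG2 F)) : Prop :=
  {P ∈ S | inc l P}.ncard = 1

/-- A nondegenerate conic in `PG(2,q)` is, combinatorially, an oval: a set of `q + 1` points
met by every line in at most `2` points. -/
def IsOval {F : Type} [Field F] (q : ℕ) (S : Set (PG2 F)) : Prop :=
  S.ncard = q + 1 ∧ ∀ l : PG2 F, {P ∈ S | inc l P}.ncard ≤ 2

/-- The conic `C_k = V(xy + kz²)`. -/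
def Ck {F : Type} [Field F] (k : F) : Set (PG2 F) :=
  {P | P.rep 0 * P.rep 1 + k * P.rep 2 ^ 2 = 0}

/-! A line `ℓ : u x + v y + w z = 0` with `w ≠ 0` misses `N = (0:0:1)`. On `ℓ` the conic
`C_k` becomes a binary quadratic form of discriminant `w² (w² + 4kuv)`; a point of `C_k` on `ℓ`
makes it a square, and when it is nonzero `ℓ` meets `C_k` twice. Otherwise `ℓ` is tangent to
`C_k`, and the discriminant for the other conic `C_{k'}` becomes a square times `k (k - k')`,
i.e. `1 - b` or `b (b - 1)`. As `-1` is a non-square for `q ≡ 3 (mod 4)`, both are nonzero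
squares, so `ℓ` is secant to `C_{k'}`. A line through `N` also meets `C_1` or `C_b`, since `uv`
or `buv` is a square. For the size: `|C_k| = q + 1` and `C_1 ∩ C_b = {(1:0:0), (0:1:0)}`. -/

section BinaryQuadraticForm

variable {K : Type*} [Field K] {a b c : K}

theorem isSquare_discrim_of_homogeneous_root {x y : K} (hxy : x ≠ 0 ∨ y ≠ 0)
    (h : a * x ^ 2 + b * x * y + c * y ^ 2 = 0) : IsSquare (discrim a b c) := by
  rcases eq_or_ne y 0 with rfl | hy
  · have ha : a = 0 := by simpa [hxy.resolve_right (not_not.2 rfl)] using h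
    exact ⟨b, by rw [discrim, ha]; ring⟩
  · refine ⟨(2 * a * x + b * y) / y, ?_⟩
    rw [div_mul_div_comm, eq_div_iff (mul_ne_zero hy hy), discrim]
    linear_combination -4 * a * h

theorem exists_homogeneous_roots_of_discrim_eq_mul_self (h2 : (2 : K) ≠ 0) {s : K} (hs : s ≠ 0)
    (hd : discrim a b c = s * s) :
    ∃ x₁ y₁ x₂ y₂ : K, a * x₁ ^ 2 + b * x₁ * y₁ + c * y₁ ^ 2 = 0 ∧
      a * x₂ ^ 2 + b * x₂ * y₂ + c * y₂ ^ 2 = 0 ∧ x₁ * y₂ ≠ x₂ * y₁ := by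
  rcases eq_or_ne a 0 with rfl | ha
  · have hb : b ≠ 0 := by
      rintro rfl
      exact mul_ne_zero hs hs (by rw [← hd, discrim]; ring)
    exact ⟨1, 0, c, -b, by ring, by ring, by simpa using hb⟩
  · refine ⟨-b + s, 2 * a, -b - s, 2 * a, ?_, ?_, ?_⟩
    · rw [discrim] at hd; linear_combination -a * hd
    · rw [discrim] at hd; linear_combination -a * hd
    · have h4 : (4 : K) ≠ 0 := by rw [show (4 : K) = 2 * 2 by norm_num]; exact mul_ne_zero h2 h2
      intro h
      exact mul_ne_zero (mul_ne_zero h4 ha) hs (by linear_combination h)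

end BinaryQuadraticForm

theorem ne_zero_of_not_isSquare {M : Type*} [MulZeroClass M] {a : M} (h : ¬IsSquare a) :
    a ≠ 0 := by
  rintro rfl
  exact h IsSquare.zero

theorem isSquare_mul_of_not_isSquare {K : Type*} [Field K] [Fintype K] {a b : K}
    (ha : ¬IsSquare a) (hb : ¬IsSquare b) : IsSquare (a * b) := by
  classical
  rw [← quadraticChar_one_iff_isSquare (mul_ne_zero (ne_zero_of_not_isSquare ha)
    (ne_zero_of_not_isSquare hb)), map_mul,
    quadraticChar_neg_one_iff_not_isSquare.2 ha, quadraticChar_neg_one_iff_not_isSquare.2 hb]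
  norm_num

variable {F : Type} [Field F]

theorem vec_ne_zero_iff {x y z : F} : ![x, y, z] ≠ 0 ↔ x ≠ 0 ∨ y ≠ 0 ∨ z ≠ 0 := by
  simp [Matrix.cons_eq_zero_iff, or_iff_not_imp_left]

theorem pt_eq_pt_iff {x y z x' y' z' : F} (h : ![x, y, z] ≠ 0) (h' : ![x', y', z'] ≠ 0) :
    pt x y z h = pt x' y' z' h' ↔
      ∃ c : F, c ≠ 0 ∧ x = c * x' ∧ y = c * y' ∧ z = c * z' := by
  rw [pt, pt, Projectivization.mk_eq_mk_iff]
  constructor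
  · rintro ⟨a, ha⟩
    simp only [Units.smul_def, Matrix.smul_cons, smul_eq_mul, Matrix.smul_empty,
      Matrix.vecCons_inj] at ha
    exact ⟨a, a.ne_zero, ha.1.symm, ha.2.1.symm, ha.2.2.1.symm⟩
  · rintro ⟨c, hc, rfl, rfl, rfl⟩
    exact ⟨Units.mk0 c hc, by simp [Units.smul_def]⟩

theorem exists_pt_eq (P : PG2 F) : ∃ (x y z : F) (h : ![x, y, z] ≠ 0), P = pt x y z h := by
  have hP : ![P.rep 0, P.rep 1, P.rep 2] = P.rep := by
    funext i; fin_cases i <;> rfl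
  exact ⟨_, _, _, hP ▸ P.rep_nonzero, by simp only [pt, hP, Projectivization.mk_rep]⟩

theorem exists_rep_pt {x y z : F} (h : ![x, y, z] ≠ 0) :
    ∃ c : F, c ≠ 0 ∧ (pt x y z h).rep = ![c * x, c * y, c * z] := by
  obtain ⟨a, ha⟩ := Projectivization.exists_smul_eq_mk_rep F ![x, y, z] h
  exact ⟨a, a.ne_zero, by simp [pt, ← ha, Units.smul_def]⟩

theorem mem_Ck_pt {k x y z : F} (h : ![x, y, z] ≠ 0) :
    pt x y z h ∈ Ck k ↔ x * y + k * z ^ 2 = 0 := by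
  obtain ⟨c, hc, hrep⟩ := exists_rep_pt h
  have : c * x * (c * y) + k * (c * z) ^ 2 = c ^ 2 * (x * y + k * z ^ 2) := by ring
  simp [Ck, hrep, this, hc]

theorem inc_pt {u v w x y z : F} (hl : ![u, v, w] ≠ 0) (hp : ![x, y, z] ≠ 0) :
    inc (pt u v w hl) (pt x y z hp) ↔ u * x + v * y + w * z = 0 := by
  obtain ⟨c, hc, hl⟩ := exists_rep_pt hl
  obtain ⟨d, hd, hp⟩ := exists_rep_pt hp
  have : c * u * (d * x) + c * v * (d * y) + c * w * (d * z) =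
      (c * d) * (u * x + v * y + w * z) := by ring
  simp [inc, hl, hp, this, hc, hd]

theorem untouchable_of_forall_exists_ne {S : Set (PG2 F)}
    (h : ∀ l P, P ∈ S → inc l P → ∃ Q ∈ S, inc l Q ∧ Q ≠ P) : Untouchable S := by
  intro l hl
  obtain ⟨P, hP⟩ := Set.ncard_eq_one.1 hl
  have hPl : P ∈ {X ∈ S | inc l X} := hP ▸ rfl
  obtain ⟨Q, hQS, hQl, hQP⟩ := h l P hPl.1 hPl.2
  have hQ : Q ∈ ({P} : Set (PG2 F)) := hP ▸ ⟨hQS, hQl⟩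
  exact hQP hQ

theorem pt_001_notMem_Ck_union_Ck {k k' : F} (hk : k ≠ 0) (hk' : k' ≠ 0) :
    pt 0 0 1 (vec_ne_zero 2 one_ne_zero) ∉ Ck k ∪ Ck k' := by
  simp [mem_Ck_pt, hk, hk']

/-- The line `u x + v y + w z = 0`, `w ≠ 0`, is parametrized by
`(x : y) ↦ (w x : w y : -(u x + v y))`, along which `C_k` pulls back to
`k u² x² + (w² + 2 k u v) x y + k v² y²`, of discriminant `w² (w² + 4 k u v)`. -/
theorem exists_ne_mem_Ck_inc_of_mul_self (h2 : (2 : F) ≠ 0) {k u v w r : F}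
    (hl : ![u, v, w] ≠ 0) (hw : w ≠ 0) (hr : r ≠ 0) (hd : w ^ 2 + 4 * k * u * v = r * r)
    (P : PG2 F) :
    ∃ Q ∈ Ck k, inc (pt u v w hl) Q ∧ Q ≠ P := by
  obtain ⟨x₁, y₁, x₂, y₂, h₁, h₂, hne⟩ :=
    exists_homogeneous_roots_of_discrim_eq_mul_self (a := k * u ^ 2) (b := w ^ 2 + 2 * k * u * v)
      (c := k * v ^ 2) h2 (mul_ne_zero hw hr) (by rw [discrim]; linear_combination w ^ 2 * hd)
  have hvec : ∀ {x y : F}, x ≠ 0 ∨ y ≠ 0 → ![w * x, w * y, -(u * x + v * y)] ≠ 0 := by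
    intro x y hxy
    rw [vec_ne_zero_iff]
    rcases hxy with hx | hy
    · exact Or.inl (mul_ne_zero hw hx)
    · exact Or.inr (Or.inl (mul_ne_zero hw hy))
  have hxy₁ : x₁ ≠ 0 ∨ y₁ ≠ 0 := by contrapose! hne; simp [hne]
  have hxy₂ : x₂ ≠ 0 ∨ y₂ ≠ 0 := by contrapose! hne; simp [hne]
  have hmem : ∀ {x y : F} (hxy : x ≠ 0 ∨ y ≠ 0),
      k * u ^ 2 * x ^ 2 + (w ^ 2 + 2 * k * u * v) * x * y + k * v ^ 2 * y ^ 2 = 0 →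
      pt _ _ _ (hvec hxy) ∈ Ck k ∧ inc (pt u v w hl) (pt _ _ _ (hvec hxy)) := by
    intro x y hxy h
    rw [mem_Ck_pt, inc_pt]
    exact ⟨by linear_combination h, by ring⟩
  have hQ₁₂ : pt _ _ _ (hvec hxy₁) ≠ pt _ _ _ (hvec hxy₂) := by
    rw [Ne, pt_eq_pt_iff]
    rintro ⟨c, -, e₁, e₂, -⟩
    exact hne (mul_left_cancel₀ hw (by linear_combination y₂ * e₁ - x₂ * e₂))
  by_cases hP : pt _ _ _ (hvec hxy₁) = P
  · exact ⟨_, (hmem hxy₂ h₂).1, (hmem hxy₂ h₂).2, hP ▸ hQ₁₂.symm⟩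
  · exact ⟨_, (hmem hxy₁ h₁).1, (hmem hxy₁ h₁).2, hP⟩

theorem isSquare_of_mem_Ck_of_inc {k u v w : F} (hl : ![u, v, w] ≠ 0) (hw : w ≠ 0) {P : PG2 F}
    (hP : P ∈ Ck k) (hinc : inc (pt u v w hl) P) : IsSquare (w ^ 2 + 4 * k * u * v) := by
  obtain ⟨x, y, z, hp, rfl⟩ := exists_pt_eq P
  rw [mem_Ck_pt] at hP
  rw [inc_pt] at hinc
  have hxy : x ≠ 0 ∨ y ≠ 0 := by
    by_contra! h0
    obtain ⟨rfl, rfl⟩ := h0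
    have hz : z = 0 := (mul_eq_zero.1 (by linear_combination hinc)).resolve_left hw
    exact hp (by simp [hz])
  obtain ⟨t, ht⟩ := isSquare_discrim_of_homogeneous_root (a := k * u ^ 2)
    (b := w ^ 2 + 2 * k * u * v) (c := k * v ^ 2) hxy
    (by linear_combination w ^ 2 * hP + k * (u * x + v * y - w * z) * hinc)
  refine ⟨t / w, ?_⟩
  rw [div_mul_div_comm, eq_div_iff (mul_ne_zero hw hw), ← ht, discrim]
  ring

theorem exists_ne_mem_Ck_union_Ck_inc (h2 : (2 : F) ≠ 0) {k k' u v w : F} (hk : k ≠ 0)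
    (hkk' : k ≠ k') (hsq : IsSquare (k * (k - k'))) (hl : ![u, v, w] ≠ 0) (hw : w ≠ 0)
    {P : PG2 F} (hP : P ∈ Ck k) (hinc : inc (pt u v w hl) P) :
    ∃ Q ∈ Ck k ∪ Ck k', inc (pt u v w hl) Q ∧ Q ≠ P := by
  obtain ⟨r, hr⟩ := isSquare_of_mem_Ck_of_inc hl hw hP hinc
  rcases eq_or_ne r 0 with rfl | hr0
  · obtain ⟨m, hm⟩ := hsq
    have hm0 : m ≠ 0 := by
      rintro rfl
      exact mul_ne_zero hk (sub_ne_zero.2 hkk') (by rw [hm, mul_zero])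
    obtain ⟨Q, hQ, hQl, hQP⟩ := exists_ne_mem_Ck_inc_of_mul_self (k := k') h2 hl hw
      (r := w * m / k) (div_ne_zero (mul_ne_zero hw hm0) hk)
      (by rw [div_mul_div_comm, eq_div_iff (mul_ne_zero hk hk)]
          linear_combination k * k' * hr + w ^ 2 * hm) P
    exact ⟨Q, Or.inr hQ, hQl, hQP⟩
  · obtain ⟨Q, hQ, hQl, hQP⟩ := exists_ne_mem_Ck_inc_of_mul_self h2 hl hw hr0 hr P
    exact ⟨Q, Or.inl hQ, hQl, hQP⟩

theorem exists_mem_Ck_union_Ck_inc [Fintype F] {b u v : F} (hb : ¬IsSquare b)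
    (hl : ![u, v, 0] ≠ 0) : ∃ Q ∈ Ck 1 ∪ Ck b, inc (pt u v 0 hl) Q := by
  have hb0 := ne_zero_of_not_isSquare hb
  have huv : u ≠ 0 ∨ v ≠ 0 := by simpa using vec_ne_zero_iff.1 hl
  by_cases h : IsSquare (u * v)
  · obtain ⟨t, ht⟩ := h
    have hvec : ![v, -u, t] ≠ 0 := vec_ne_zero_iff.2 (by rw [neg_ne_zero]; tauto)
    refine ⟨pt v (-u) t hvec, Or.inl ?_, ?_⟩
    · rw [mem_Ck_pt]; linear_combination -ht
    · rw [inc_pt]; ring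
  · obtain ⟨t, ht⟩ := isSquare_mul_of_not_isSquare h hb
    have hvec : ![b * v, -(b * u), t] ≠ 0 := vec_ne_zero_iff.2 (by simp [hb0]; tauto)
    refine ⟨pt (b * v) (-(b * u)) t hvec, Or.inr ?_, ?_⟩
    · rw [mem_Ck_pt]; linear_combination -b * ht
    · rw [inc_pt]; ring

theorem exists_ne_mem_inc_of_line_through_pt_001 [Fintype F] {b u v : F} (hb : ¬IsSquare b)
    (hl : ![u, v, 0] ≠ 0) {P : PG2 F}
    (hP : P ∈ Ck 1 ∪ Ck b ∪ {pt 0 0 1 (vec_ne_zero 2 one_ne_zero)}) :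
    ∃ Q ∈ Ck 1 ∪ Ck b ∪ {pt 0 0 1 (vec_ne_zero 2 one_ne_zero)},
      inc (pt u v 0 hl) Q ∧ Q ≠ P := by
  have hN := pt_001_notMem_Ck_union_Ck one_ne_zero (ne_zero_of_not_isSquare hb)
  rcases hP with hP | rfl
  · exact ⟨_, Or.inr rfl, by rw [inc_pt]; ring, fun h => hN (h ▸ hP)⟩
  · obtain ⟨Q, hQ, hQl⟩ := exists_mem_Ck_union_Ck_inc hb hl
    exact ⟨Q, Or.inl hQ, hQl, fun h => hN (h ▸ hQ)⟩

theorem Ck_eq_insert_range {k : F} (hk : k ≠ 0) :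
    Ck k = insert (pt 1 0 0 (vec_ne_zero 0 one_ne_zero))
      (Set.range fun x : F => pt (x ^ 2) (-k) x (vec_ne_zero 1 (neg_ne_zero.2 hk))) := by
  ext P
  constructor
  · intro hP
    obtain ⟨x, y, z, hp, rfl⟩ := exists_pt_eq P
    rw [mem_Ck_pt] at hP
    rcases eq_or_ne y 0 with rfl | hy
    · have hz : z = 0 := by simpa [hk] using hP
      have hx : x ≠ 0 := by simpa [hz] using vec_ne_zero_iff.1 hp
      exact Or.inl ((pt_eq_pt_iff _ _).2 ⟨x, hx, by ring, by ring, by rw [hz]; ring⟩)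
    · refine Or.inr
        ⟨-k * z / y, (pt_eq_pt_iff _ _).2 ⟨-k / y, by simp [hk, hy], ?_, ?_, ?_⟩⟩
      · field_simp
        linear_combination hP
      · field_simp
      · field_simp
  · rintro (rfl | ⟨t, rfl⟩) <;> rw [mem_Ck_pt] <;> ring

theorem ncard_Ck [Fintype F] {k : F} (hk : k ≠ 0) : (Ck k).ncard = Fintype.card F + 1 := by
  have hinj :
      Function.Injective fun x : F => pt (x ^ 2) (-k) x (vec_ne_zero 1 (neg_ne_zero.2 hk)) := by
    intro x y hxy
    obtain ⟨c, -, -, e₂, e₃⟩ := (pt_eq_pt_iff _ _).1 hxy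
    have hc : c = 1 := by
      have : k * (c - 1) = 0 := by linear_combination e₂
      linear_combination (mul_eq_zero.1 this).resolve_left hk
    rw [e₃, hc, one_mul]
  have hE : pt 1 0 0 (vec_ne_zero 0 one_ne_zero) ∉
      Set.range fun x : F => pt (x ^ 2) (-k) x (vec_ne_zero 1 (neg_ne_zero.2 hk)) := by
    rintro ⟨x, hx⟩
    obtain ⟨c, -, -, e₂, -⟩ := (pt_eq_pt_iff _ _).1 hx
    exact hk (by linear_combination -e₂)
  rw [Ck_eq_insert_range hk, Set.ncard_insert_of_notMem hE, Set.ncard_range_of_injective hinj,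
    Nat.card_eq_fintype_card]

theorem Ck_inter_Ck {k k' : F} (hkk' : k ≠ k') :
    Ck k ∩ Ck k' =
      {pt 1 0 0 (vec_ne_zero 0 one_ne_zero), pt 0 1 0 (vec_ne_zero 1 one_ne_zero)} := by
  ext P
  obtain ⟨x, y, z, hp, rfl⟩ := exists_pt_eq P
  rw [Set.mem_inter_iff, mem_Ck_pt, mem_Ck_pt, Set.mem_insert_iff, Set.mem_singleton_iff,
    pt_eq_pt_iff, pt_eq_pt_iff]
  constructor
  · rintro ⟨h, h'⟩
    have hz : z = 0 := by
      have : (k - k') * z ^ 2 = 0 := by linear_combination h - h'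
      simpa [sub_ne_zero.2 hkk'] using this
    subst hz
    rcases mul_eq_zero.1 (by simpa using h : x * y = 0) with rfl | rfl
    · exact Or.inr ⟨y, by simpa using hp, by ring, by ring, by ring⟩
    · exact Or.inl ⟨x, by simpa using hp, by ring, by ring, by ring⟩
  · rintro (⟨c, -, rfl, rfl, rfl⟩ | ⟨c, -, rfl, rfl, rfl⟩) <;> constructor <;> ring

theorem ncard_Ck_union_Ck_union_pt_001 [Fintype F] {k k' : F} (hk : k ≠ 0) (hk' : k' ≠ 0)
    (hkk' : k ≠ k') :
    (Ck k ∪ Ck k' ∪ {pt 0 0 1 (vec_ne_zero 2 one_ne_zero)}).ncard = 2 * Fintype.card F + 1 := by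
  have hE :
      pt (1 : F) 0 0 (vec_ne_zero 0 one_ne_zero) ≠ pt 0 1 0 (vec_ne_zero 1 one_ne_zero) := by
    rw [Ne, pt_eq_pt_iff]
    rintro ⟨c, -, e, -, -⟩
    exact one_ne_zero (e.trans (mul_zero c))
  have hunion := Set.ncard_union_add_ncard_inter (Ck k) (Ck k')
  rw [Ck_inter_Ck hkk', Set.ncard_pair hE, ncard_Ck hk, ncard_Ck hk'] at hunion
  rw [Set.union_singleton, Set.ncard_insert_of_notMem (pt_001_notMem_Ck_union_Ck hk hk')]
  omega

/-- In `PG(2,q)` with `q ≡ 3 (mod 4)`, `q ≥ 7`, if `b` and `b − 1` are non-squares, then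
`S = C_1 ∪ C_b ∪ {(0:0:1)}` is an untouchable set of size `2q + 1`. -/
theorem untouchable_two_q_plus_one_odd {F : Type} [Field F] [Fintype F] {q : ℕ}
    (hq : Fintype.card F = q) (h3 : q % 4 = 3)
    (b : F) (hb : ¬ IsSquare b) (hb1 : ¬ IsSquare (b - 1)) :
    Untouchable (Ck 1 ∪ Ck b ∪ {pt (0 : F) 0 1 (vec_ne_zero 2 (by simp))}) ∧
      (Ck 1 ∪ Ck b ∪ {pt (0 : F) 0 1 (vec_ne_zero 2 (by simp))}).ncard = 2 * q + 1 := by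
  have h2 : (2 : F) ≠ 0 := Ring.two_ne_zero fun h => by
    have := FiniteField.even_card_iff_char_two.1 h
    omega
  have hneg : ¬IsSquare (-1 : F) := by rw [FiniteField.isSquare_neg_one_iff]; omega
  have hb0 := ne_zero_of_not_isSquare hb
  have hb1' : (1 : F) ≠ b := fun h => hb1 (by rw [← h, sub_self]; exact IsSquare.zero)
  refine ⟨untouchable_of_forall_exists_ne fun l P hP hinc => ?_,
    hq ▸ ncard_Ck_union_Ck_union_pt_001 one_ne_zero hb0 hb1'⟩
  obtain ⟨u, v, w, hl, rfl⟩ := exists_pt_eq l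
  rcases eq_or_ne w 0 with rfl | hw
  · exact exists_ne_mem_inc_of_line_through_pt_001 hb hl hP
  rcases hP with (hP | hP) | rfl
  · obtain ⟨Q, hQ, hQl, hQP⟩ := exists_ne_mem_Ck_union_Ck_inc h2 one_ne_zero hb1' (by
      simpa [neg_sub] using isSquare_mul_of_not_isSquare hneg hb1) hl hw hP hinc
    exact ⟨Q, Or.inl hQ, hQl, hQP⟩
  · obtain ⟨Q, hQ, hQl, hQP⟩ := exists_ne_mem_Ck_union_Ck_inc h2 hb0 hb1'.symm
      (isSquare_mul_of_not_isSquare hb hb1) hl hw hP hinc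
    exact ⟨Q, Or.inl hQ.symm, hQl, hQP⟩
  · simp [inc_pt, hw] at hinc
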